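/- arXiv:1208.5831 — 5 statements merged into one kernel-verified Lean document; each statement's English description precedes it below -/
import Mathlib

section
/- Let X be a Banach space, T a bounded operator on X, and Y a closed subspace of X. Then Y is almost-invariant for T (i.e., there exists a finite-dimensional subspace M with T(Y) ⊆ Y + M) if and only if Y is invariant under T − F for some finite-rank bounded operator F on X. -/
/-!
If `T(Y) ⊆ Y + M` with `M` finite-dimensional, the image `N` of `M` in the normed space
`X ⧸ Y` is finite-dimensional, hence complemented by a continuous projection `π`. Lifting `N`
back to `X` turns `π ∘ (X → X ⧸ Y)` into a finite-rank operator `P` with `x - P x ∈ Y` for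
all `x ∈ Y + M`, and `F = P ∘ T` works. Conversely `T y = (T - F) y + F y ∈ Y + range F`.
-/

namespace Submodule

variable {𝕜 E : Type*} [RCLike 𝕜] [NormedAddCommGroup E] [NormedSpace 𝕜 E]

theorem exists_continuousLinearMap_mkQ_comp_eq_subtype {Y : Submodule 𝕜 E}
    (hY : IsClosed (Y : Set E)) (N : Submodule 𝕜 (E ⧸ Y)) [FiniteDimensional 𝕜 N] :
    ∃ ι : N →L[𝕜] E, ∀ n : N, Y.mkQ (ι n) = n := by
  -- as an instance, closedness makes `E ⧸ Y` Hausdorff, so linear maps out of `N` are continuous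
  have : IsClosed (Y : Set E) := hY
  obtain ⟨ι, hι⟩ := Module.projective_lifting_property Y.mkQ N.subtype Y.mkQ_surjective
  exact ⟨LinearMap.toContinuousLinearMap ι, fun n => LinearMap.congr_fun hι n⟩

theorem exists_finiteRank_sub_mem_of_mem_sup {Y : Submodule 𝕜 E} (hY : IsClosed (Y : Set E))
    (M : Submodule 𝕜 E) [FiniteDimensional 𝕜 M] :
    ∃ P : E →L[𝕜] E, FiniteDimensional 𝕜 (LinearMap.range (P : E →ₗ[𝕜] E)) ∧
      ∀ x ∈ Y ⊔ M, x - P x ∈ Y := by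
  set N := M.map Y.mkQ
  obtain ⟨π, hπ⟩ := ClosedComplemented.of_finiteDimensional N
  obtain ⟨ι, hι⟩ := exists_continuousLinearMap_mkQ_comp_eq_subtype hY N
  refine ⟨ι ∘L π ∘L Y.mkQL, ?_, fun x hx => ?_⟩
  · exact finiteDimensional_of_le
      (LinearMap.range_comp_le_range (π ∘L Y.mkQL).toLinearMap ι.toLinearMap)
  · have hqx : Y.mkQ x ∈ N := by
      rw [← sup_bot_eq N, ← mkQ_map_self Y, ← map_sup, sup_comm]
      exact mem_map_of_mem hx
    refine (Quotient.eq Y).mp ?_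
    change Y.mkQ x = Y.mkQ (ι (π (Y.mkQ x)))
    rw [hπ ⟨_, hqx⟩, hι]

end Submodule

theorem almost_invariant_iff_invariant_perturbation_general
    {X : Type*} [NormedAddCommGroup X] [NormedSpace ℂ X]
    (T : X →L[ℂ] X) (Y : Submodule ℂ X) (hY : IsClosed (Y : Set X)) :
    (∃ M : Submodule ℂ X, FiniteDimensional ℂ M ∧ ∀ y ∈ Y, T y ∈ Y ⊔ M) ↔
    (∃ F : X →L[ℂ] X, FiniteDimensional ℂ (LinearMap.range (F : X →ₗ[ℂ] X)) ∧
      ∀ y ∈ Y, (T - F) y ∈ Y) := by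
  constructor
  · rintro ⟨M, hM, hTY⟩
    obtain ⟨P, hP, hPY⟩ := Submodule.exists_finiteRank_sub_mem_of_mem_sup hY M
    refine ⟨P ∘L T, ?_, fun y hy => hPY (T y) (hTY y hy)⟩
    exact Submodule.finiteDimensional_of_le
      (LinearMap.range_comp_le_range (T : X →ₗ[ℂ] X) (P : X →ₗ[ℂ] X))
  · rintro ⟨F, hF, hinv⟩
    refine ⟨LinearMap.range (F : X →ₗ[ℂ] X), hF, fun y hy => ?_⟩
    rw [← sub_add_cancel T F]
    exact Submodule.add_mem_sup (hinv y hy) ⟨y, rfl⟩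

/-- A closed subspace `Y` of a complex Banach space is almost-invariant for `T`
(i.e. `T(Y) ⊆ Y + M` for some finite-dimensional `M`) iff `Y` is invariant under
`T - F` for some finite-rank bounded operator `F`. -/
theorem almost_invariant_iff_invariant_perturbation
    {X : Type*} [NormedAddCommGroup X] [NormedSpace ℂ X] [CompleteSpace X]
    (T : X →L[ℂ] X) (Y : Submodule ℂ X) (hY : IsClosed (Y : Set X)) :
    (∃ M : Submodule ℂ X, FiniteDimensional ℂ M ∧ ∀ y ∈ Y, T y ∈ Y ⊔ M) ↔
    (∃ F : X →L[ℂ] X, FiniteDimensional ℂ (LinearMap.range (F : X →ₗ[ℂ] X)) ∧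
      ∀ y ∈ Y, (T - F) y ∈ Y) :=
  almost_invariant_iff_invariant_perturbation_general T Y hY
end

section
/- Let X be a Banach space and T a bounded operator on X. If T admits an almost-invariant half-space, then the adjoint T* on X* also admits an almost-invariant half-space. -/
/-!
Replace `Y` by `W = Y ⊔ M`: it is still a closed half-space, and `T W ≤ W ⊔ T M`. Its
annihilator `Z = W^⊥` is closed, contains a copy of `(X ⧸ W)*` and has quotient `X* ⧸ Z ≅ W*`
by Hahn–Banach, so both are infinite dimensional. A functional in `Z` that also vanishes on the
finite-dimensional space `T M` is sent by `T*` into `Z`; these functionals have finite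
codimension in `Z`, so `T*` maps a finite-dimensional complement of them onto the error term.
-/

theorem FiniteDimensional.of_strongDual {𝕜 V : Type*} [Field 𝕜] [TopologicalSpace 𝕜]
    [IsTopologicalRing 𝕜] [AddCommGroup V] [TopologicalSpace V] [Module 𝕜 V]
    [SeparatingDual 𝕜 V] [FiniteDimensional 𝕜 (StrongDual 𝕜 V)] : FiniteDimensional 𝕜 V :=
  .of_injective _ (separatingDual_iff_injective.mp ‹_›)

namespace Submodule

section LinearAlgebra

variable {K V : Type*} [DivisionRing K] [AddCommGroup V] [Module K V]

theorem CoFG.of_sup_fg {S T : Submodule K V} (hST : (S ⊔ T).CoFG) (hT : T.FG) : S.CoFG := by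
  obtain ⟨C, hC⟩ := (S ⊔ T).exists_isCompl
  refine (hT.sup (hST.fg_of_isCompl hC)).cofg_of_codisjoint ?_
  rw [codisjoint_iff, sup_comm, ← sup_assoc]
  exact hC.sup_eq_top

theorem exists_finiteDimensional_forall_map_mem_sup {V' F : Type*} [AddCommGroup V']
    [Module K V'] [AddCommGroup F] [Module K F] [FiniteDimensional K F] (L : V →ₗ[K] V')
    (φ : V →ₗ[K] F) {Z : Submodule K V} {Z' : Submodule K V'}
    (h : Z ⊓ LinearMap.ker φ ≤ Z'.comap L) :
    ∃ M : Submodule K V', FiniteDimensional K M ∧ ∀ z ∈ Z, L z ∈ Z' ⊔ M := by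
  obtain ⟨C, hC⟩ := (LinearMap.ker (φ ∘ₗ Z.subtype)).exists_isCompl
  have : FiniteDimensional K C := Module.Finite.iff_fg.mpr ((CoFG.ker _).fg_of_isCompl hC)
  refine ⟨C.map (L ∘ₗ Z.subtype), inferInstance, fun z hz => ?_⟩
  obtain ⟨k, hk, c, hc, hkc⟩ :=
    mem_sup.mp (hC.sup_eq_top ▸ mem_top : (⟨z, hz⟩ : Z) ∈ _ ⊔ C)
  rw [show z = k + c from congrArg Subtype.val hkc.symm, map_add]
  exact add_mem_sup (h ⟨k.2, hk⟩) (mem_map_of_mem hc)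

theorem apply_mem_sup_map_of_forall_apply_mem_sup (T : V →ₗ[K] V) {Y M : Submodule K V}
    (h : ∀ y ∈ Y, T y ∈ Y ⊔ M) : ∀ w ∈ Y ⊔ M, T w ∈ Y ⊔ M ⊔ M.map T := by
  intro w hw
  obtain ⟨y, hy, m, hm, rfl⟩ := mem_sup.mp hw
  rw [map_add]
  exact add_mem (mem_sup_left (h y hy)) (mem_sup_right (mem_map_of_mem hm))

end LinearAlgebra

section StrongDualAnnihilator

variable {𝕜 E : Type*} [RCLike 𝕜] [NormedAddCommGroup E] [NormedSpace 𝕜 E]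

noncomputable def strongDualAnnihilator (W : Submodule 𝕜 E) : Submodule 𝕜 (StrongDual 𝕜 E) :=
  (ContinuousLinearMap.precomp 𝕜 W.subtypeL).toLinearMap.ker

theorem mem_strongDualAnnihilator {W : Submodule 𝕜 E} {f : StrongDual 𝕜 E} :
    f ∈ W.strongDualAnnihilator ↔ ∀ w ∈ W, f w = 0 := by
  simp [strongDualAnnihilator, ContinuousLinearMap.ext_iff]

theorem isClosed_strongDualAnnihilator (W : Submodule 𝕜 E) :
    IsClosed (W.strongDualAnnihilator : Set (StrongDual 𝕜 E)) :=
  ContinuousLinearMap.isClosed_ker _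

theorem finiteDimensional_quotient_of_strongDualAnnihilator (W : Submodule 𝕜 E)
    [IsClosed (W : Set E)] [FiniteDimensional 𝕜 W.strongDualAnnihilator] :
    FiniteDimensional 𝕜 (E ⧸ W) := by
  let ι : StrongDual 𝕜 (E ⧸ W) →ₗ[𝕜] W.strongDualAnnihilator :=
    (ContinuousLinearMap.precomp 𝕜 W.mkQL).toLinearMap.codRestrict W.strongDualAnnihilator
      fun g => mem_strongDualAnnihilator.mpr fun w hw => by
        simpa using congrArg g ((Quotient.mk_eq_zero W).mpr hw)
  have hι : Function.Injective ι := fun g₁ g₂ hg => ContinuousLinearMap.ext fun z => by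
    obtain ⟨x, rfl⟩ := W.mkQ_surjective z
    exact congr($hg.1 x)
  have := FiniteDimensional.of_injective (V₂ := W.strongDualAnnihilator) ι hι
  exact .of_strongDual

theorem finiteDimensional_of_quotient_strongDualAnnihilator (W : Submodule 𝕜 E)
    [FiniteDimensional 𝕜 (StrongDual 𝕜 E ⧸ W.strongDualAnnihilator)] :
    FiniteDimensional 𝕜 W := by
  have hsurj : Function.Surjective (ContinuousLinearMap.precomp 𝕜 W.subtypeL) := fun g => by
    obtain ⟨f, hf, -⟩ := exists_extension_norm_eq W g
    exact ⟨f, ContinuousLinearMap.ext hf⟩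
  have e : (StrongDual 𝕜 E ⧸ W.strongDualAnnihilator) ≃ₗ[𝕜] StrongDual 𝕜 W :=
    LinearMap.quotKerEquivOfSurjective _ hsurj
  have := Module.Finite.equiv e
  exact .of_strongDual

theorem exists_finiteDimensional_forall_comp_mem_strongDualAnnihilator_sup (T : E →L[𝕜] E)
    {W N : Submodule 𝕜 E} [FiniteDimensional 𝕜 N] (h : ∀ w ∈ W, T w ∈ W ⊔ N) :
    ∃ M : Submodule 𝕜 (StrongDual 𝕜 E), FiniteDimensional 𝕜 M ∧
      ∀ f ∈ W.strongDualAnnihilator, f.comp T ∈ W.strongDualAnnihilator ⊔ M := by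
  refine exists_finiteDimensional_forall_map_mem_sup (K := 𝕜)
    (ContinuousLinearMap.precomp 𝕜 T).toLinearMap
    (ContinuousLinearMap.precomp 𝕜 N.subtypeL).toLinearMap fun f hf => ?_
  obtain ⟨hfW, hfN⟩ := mem_inf.mp hf
  change f ∈ N.strongDualAnnihilator at hfN
  rw [mem_comap, mem_strongDualAnnihilator] at *
  intro w hw
  obtain ⟨w', hw', n, hn, hTw⟩ := mem_sup.mp (h w hw)
  simp [← hTw, hfW w' hw', hfN n hn]

end StrongDualAnnihilator

end Submodule

theorem adjoint_almost_invariant_halfspace_general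
    {X : Type*} [NormedAddCommGroup X] [NormedSpace ℂ X]
    (T : X →L[ℂ] X)
    (h : ∃ Y : Submodule ℂ X, IsClosed (Y : Set X) ∧ ¬FiniteDimensional ℂ Y ∧
        ¬FiniteDimensional ℂ (X ⧸ Y) ∧
        ∃ M : Submodule ℂ X, FiniteDimensional ℂ M ∧ ∀ y ∈ Y, T y ∈ Y ⊔ M) :
    ∃ Z : Submodule ℂ (StrongDual ℂ X), IsClosed (Z : Set (StrongDual ℂ X)) ∧
      ¬FiniteDimensional ℂ Z ∧ ¬FiniteDimensional ℂ (StrongDual ℂ X ⧸ Z) ∧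
      ∃ M : Submodule ℂ (StrongDual ℂ X), FiniteDimensional ℂ M ∧
        ∀ f ∈ Z, f.comp T ∈ Z ⊔ M := by
  obtain ⟨Y, hYc, hY, hXY, M, hM, hTY⟩ := h
  have : IsClosed ((Y ⊔ M : Submodule ℂ X) : Set X) := Y.isClosed_sup_finiteDimensional M hYc
  refine ⟨(Y ⊔ M).strongDualAnnihilator, (Y ⊔ M).isClosed_strongDualAnnihilator,
    fun _ => ?_, fun _ => ?_,
    Submodule.exists_finiteDimensional_forall_comp_mem_strongDualAnnihilator_sup T
      (Submodule.apply_mem_sup_map_of_forall_apply_mem_sup (T : X →ₗ[ℂ] X) hTY)⟩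
  · have := (Y ⊔ M).finiteDimensional_quotient_of_strongDualAnnihilator
    exact hXY (Submodule.CoFG.of_sup_fg this (Module.Finite.iff_fg.mp hM))
  · have := (Y ⊔ M).finiteDimensional_of_quotient_strongDualAnnihilator
    exact hY (Submodule.finiteDimensional_of_le (S₂ := Y ⊔ M) le_sup_left)

/-- If `T` admits an almost-invariant half-space, then so does its Banach-space
adjoint `T*` acting on the dual `X*` (the adjoint action on a functional `f` is
`f ∘ T`). -/
theorem adjoint_almost_invariant_halfspace
    {X : Type*} [NormedAddCommGroup X] [NormedSpace ℂ X] [CompleteSpace X]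
    (T : X →L[ℂ] X)
    (h : ∃ Y : Submodule ℂ X, IsClosed (Y : Set X) ∧ ¬FiniteDimensional ℂ Y ∧
        ¬FiniteDimensional ℂ (X ⧸ Y) ∧
        ∃ M : Submodule ℂ X, FiniteDimensional ℂ M ∧ ∀ y ∈ Y, T y ∈ Y ⊔ M) :
    ∃ Z : Submodule ℂ (StrongDual ℂ X), IsClosed (Z : Set (StrongDual ℂ X)) ∧
      ¬FiniteDimensional ℂ Z ∧ ¬FiniteDimensional ℂ (StrongDual ℂ X ⧸ Z) ∧
      ∃ M : Submodule ℂ (StrongDual ℂ X), FiniteDimensional ℂ M ∧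
        ∀ f ∈ Z, f.comp T ∈ Z ⊔ M :=
  adjoint_almost_invariant_halfspace_general T h
end

section
/- Let H be a Hilbert space, T a bounded operator on H, Y a closed subspace of H, and P the orthogonal projection onto Y. If Y is almost-invariant for T with finite-dimensional defect subspace M, then Y is invariant under T − F where F = (I − P)TP, and F has finite rank. -/
/-!
Let `P` be the projection onto `Y`. On `Y`, the perturbed operator `T - (1 - P) T P` agrees with
`P T`, whose values lie in `Y`. Since `1 - P` kills `Y` and `T Y ⊆ Y + M`, the range of
`(1 - P) T P` lies in the image of `M` under `1 - P`, which is finite-dimensional.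
-/

namespace LinearMap.IsProj

section Ring

variable {R E : Type*} [Ring R] [AddCommGroup E] [Module R E] {Y : Submodule R E}
  {P : E →ₗ[R] E}

theorem one_sub_apply_eq_zero (hP : IsProj Y P) {y : E} (hy : y ∈ Y) : (1 - P) y = 0 := by
  rw [sub_apply, Module.End.one_apply, hP.map_id y hy, sub_self]

theorem sub_one_sub_comp_comp_apply (hP : IsProj Y P) (T : E →ₗ[R] E) {y : E} (hy : y ∈ Y) :
    (T - (1 - P) ∘ₗ T ∘ₗ P : E →ₗ[R] E) y = P (T y) := by
  simp only [sub_apply, comp_apply, Module.End.one_apply, hP.map_id y hy, sub_sub_cancel]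

theorem sub_one_sub_comp_comp_apply_mem (hP : IsProj Y P) (T : E →ₗ[R] E) {y : E} (hy : y ∈ Y) :
    (T - (1 - P) ∘ₗ T ∘ₗ P : E →ₗ[R] E) y ∈ Y :=
  hP.sub_one_sub_comp_comp_apply T hy ▸ hP.map_mem (T y)

theorem range_one_sub_comp_comp_le_map {T : E →ₗ[R] E} {M : Submodule R E}
    (hP : IsProj Y P) (hT : ∀ y ∈ Y, T y ∈ Y ⊔ M) :
    range ((1 - P) ∘ₗ T ∘ₗ P) ≤ M.map (1 - P) := by
  rintro _ ⟨x, rfl⟩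
  obtain ⟨y, hy, m, hm, hym⟩ := Submodule.mem_sup.mp (hT _ (hP.map_mem x))
  refine ⟨m, hm, ?_⟩
  rw [comp_apply, comp_apply, ← hym, map_add, hP.one_sub_apply_eq_zero hy, zero_add]

end Ring

theorem finiteDimensional_range_one_sub_comp_comp {K E : Type*} [DivisionRing K] [AddCommGroup E]
    [Module K E] {Y M : Submodule K E} {P T : E →ₗ[K] E} [FiniteDimensional K M]
    (hP : IsProj Y P) (hT : ∀ y ∈ Y, T y ∈ Y ⊔ M) :
    FiniteDimensional K (range ((1 - P) ∘ₗ T ∘ₗ P)) :=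
  Submodule.finiteDimensional_of_le (hP.range_one_sub_comp_comp_le_map hT)

end LinearMap.IsProj

theorem Submodule.isProj_starProjection {𝕜 E : Type*} [RCLike 𝕜] [NormedAddCommGroup E]
    [InnerProductSpace 𝕜 E] (Y : Submodule 𝕜 E) [Y.HasOrthogonalProjection] :
    LinearMap.IsProj Y Y.starProjection.toLinearMap :=
  ⟨Y.starProjection_apply_mem, fun _ hy => Y.starProjection_eq_self_iff.mpr hy⟩

theorem invariant_under_projection_perturbation_general
    {H : Type*} [NormedAddCommGroup H] [InnerProductSpace ℂ H]
    (T : H →L[ℂ] H) (Y : Submodule ℂ H) [CompleteSpace Y]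
    (M : Submodule ℂ H) (hM : FiniteDimensional ℂ M)
    (hinv : ∀ y ∈ Y, T y ∈ Y ⊔ M) :
    (∀ y ∈ Y,
      (T - (ContinuousLinearMap.id ℂ H - Y.subtypeL.comp (Submodule.orthogonalProjection Y)).comp
          (T.comp (Y.subtypeL.comp (Submodule.orthogonalProjection Y)))) y ∈ Y) ∧
    FiniteDimensional ℂ
      (LinearMap.range
        (((ContinuousLinearMap.id ℂ H - Y.subtypeL.comp (Submodule.orthogonalProjection Y)).comp
          (T.comp (Y.subtypeL.comp (Submodule.orthogonalProjection Y)))) : H →ₗ[ℂ] H)) :=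
  ⟨fun _ hy => Y.isProj_starProjection.sub_one_sub_comp_comp_apply_mem T.toLinearMap hy,
    Y.isProj_starProjection.finiteDimensional_range_one_sub_comp_comp (T := T.toLinearMap) hinv⟩

/-- If `Y` is almost-invariant for `T` with finite-dimensional defect subspace `M`,
then `Y` is invariant under `T - F` where `F = (I - P) T P`, `P` being the
orthogonal projection onto `Y`, and `F` has finite rank. -/
theorem invariant_under_projection_perturbation
    {H : Type*} [NormedAddCommGroup H] [InnerProductSpace ℂ H] [CompleteSpace H]
    (T : H →L[ℂ] H) (Y : Submodule ℂ H) [CompleteSpace Y]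
    (M : Submodule ℂ H) (hM : FiniteDimensional ℂ M)
    (hinv : ∀ y ∈ Y, T y ∈ Y ⊔ M) :
    (∀ y ∈ Y,
      (T - (ContinuousLinearMap.id ℂ H - Y.subtypeL.comp (Submodule.orthogonalProjection Y)).comp
          (T.comp (Y.subtypeL.comp (Submodule.orthogonalProjection Y)))) y ∈ Y) ∧
    FiniteDimensional ℂ
      (LinearMap.range
        (((ContinuousLinearMap.id ℂ H - Y.subtypeL.comp (Submodule.orthogonalProjection Y)).comp
          (T.comp (Y.subtypeL.comp (Submodule.orthogonalProjection Y)))) : H →ₗ[ℂ] H)) :=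
  invariant_under_projection_perturbation_general T Y M hM hinv
end

section
/- Every infinite-dimensional Banach space contains a half-space, i.e., a closed subspace of infinite dimension and infinite codimension. -/
/-!
In an infinite-dimensional normed space a finite biorthogonal system `(xᵢ, fᵢ)` can always be
extended: the common kernel of the `fᵢ` has finite codimension, so it is not contained in the span
of the `xᵢ`, and Hahn–Banach gives a functional vanishing on that span and equal to `1` at a vector
of the kernel outside it. This yields a biorthogonal system indexed by `ℕ ⊕ ℕ`. The common kernel
`Y` of the functionals of the right copy is closed; the vectors of the left copy lie in `Y` and are
independent there, while the classes of the vectors of the right copy are independent in `X ⧸ Y`.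
-/

open Submodule

section LinearAlgebra

variable {K M : Type*} [Field K] [AddCommGroup M] [Module K M]

theorem Module.not_finite_of_biorthogonal {ι : Type*} [Infinite ι] [DecidableEq ι] (v : ι → M)
    (f : ι → Module.Dual K M) (h : ∀ i j, f i (v j) = if i = j then 1 else 0) :
    ¬Module.Finite K M := by
  have hv : LinearIndependent K v := by
    refine LinearIndependent.of_comp (LinearMap.pi f) ?_
    have hpi : LinearMap.pi f ∘ v = fun j => Pi.single j 1 := by
      ext j i
      simp [h, Pi.single_apply]
    rw [hpi]
    exact Pi.linearIndependent_single_one ι K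
  exact fun _ => Module.Finite.not_linearIndependent_of_infinite v hv

theorem exists_mem_ker_notMem_of_not_finite {V : Type*} [AddCommGroup V] [Module K V]
    [Module.Finite K V] (hM : ¬Module.Finite K M) (T : M →ₗ[K] V) (N : Submodule K M)
    [Module.Finite K N] : ∃ a ∈ LinearMap.ker T, a ∉ N := by
  by_contra! hTN
  have : Module.Finite K (LinearMap.ker T) := Submodule.finiteDimensional_of_le hTN
  have : Module.Finite K (M ⧸ LinearMap.ker T) := .equiv T.quotKerEquivRange.symm
  exact hM (.of_submodule_quotient (LinearMap.ker T))

variable {ι κ : Type*} [DecidableEq ι] [DecidableEq κ] (v : ι ⊕ κ → M)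
  (f : ι ⊕ κ → Module.Dual K M)

theorem inl_mem_iInf_ker_inr (h : ∀ i j, f i (v j) = if i = j then 1 else 0) (i : ι) :
    v (.inl i) ∈ ⨅ k, LinearMap.ker (f (.inr k)) :=
  mem_iInf _ |>.2 fun k => by simp [h]

theorem not_finite_iInf_ker_inr [Infinite ι] (h : ∀ i j, f i (v j) = if i = j then 1 else 0) :
    ¬Module.Finite K (⨅ k, LinearMap.ker (f (.inr k)) : Submodule K M) := by
  set Y := ⨅ k, LinearMap.ker (f (.inr k))
  refine Module.not_finite_of_biorthogonal (fun i => ⟨v (.inl i), inl_mem_iInf_ker_inr v f h i⟩)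
    (fun i => (f (.inl i)).comp Y.subtype) fun i j => ?_
  simp [h]

theorem not_finite_quotient_iInf_ker_inr [Infinite κ]
    (h : ∀ i j, f i (v j) = if i = j then 1 else 0) :
    ¬Module.Finite K (M ⧸ ⨅ k, LinearMap.ker (f (.inr k))) := by
  set Y := ⨅ k, LinearMap.ker (f (.inr k))
  refine Module.not_finite_of_biorthogonal (fun k => Y.mkQ (v (.inr k)))
    (fun k => Y.liftQ (f (.inr k)) (iInf_le _ k)) fun i j => ?_
  simp [h]

end LinearAlgebra

section Normed

variable {𝕜 X : Type*} [RCLike 𝕜] [NormedAddCommGroup X] [NormedSpace 𝕜 X]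

theorem exists_strongDual_eq_one_of_notMem {N : Submodule 𝕜 X} (hN : IsClosed (N : Set X)) {a : X}
    (ha : a ∉ N) : ∃ g : StrongDual 𝕜 X, (∀ x ∈ N, g x = 0) ∧ g a = 1 := by
  have : IsClosed (N : Set X) := hN
  obtain ⟨g, hg⟩ := SeparatingDual.exists_eq_one (R := 𝕜) (x := N.mkQ a) (by simpa using ha)
  exact ⟨g.comp N.mkQL, fun x hx => by simp [(Quotient.mk_eq_zero N).2 hx], hg⟩

theorem exists_biorthogonal_extension (hX : ¬FiniteDimensional 𝕜 X) {s : Set X} (hs : s.Finite)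
    {F : Set (StrongDual 𝕜 X)} (hF : F.Finite) :
    ∃ a : X, ∃ g : StrongDual 𝕜 X, (∀ f ∈ F, f a = 0) ∧ (∀ x ∈ s, g x = 0) ∧ g a = 1 := by
  have : Finite F := hF.to_subtype
  have : FiniteDimensional 𝕜 (span 𝕜 s) := FiniteDimensional.span_of_finite 𝕜 hs
  obtain ⟨a, haF, has⟩ := exists_mem_ker_notMem_of_not_finite hX
    (LinearMap.pi fun f : F => (f : X →ₗ[𝕜] 𝕜)) (span 𝕜 s)
  obtain ⟨g, hg, hga⟩ :=
    exists_strongDual_eq_one_of_notMem (span 𝕜 s).closed_of_finiteDimensional has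
  exact ⟨a, g, fun f hf => congr_fun haF ⟨f, hf⟩, fun x hx => hg x (subset_span hx), hga⟩

theorem exists_biorthogonal (ι : Type*) [Countable ι] [DecidableEq ι]
    (hX : ¬FiniteDimensional 𝕜 X) :
    ∃ (x : ι → X) (f : ι → StrongDual 𝕜 X), ∀ i j, f i (x j) = if i = j then 1 else 0 := by
  let r (p q : X × StrongDual 𝕜 X) : Prop := p.2 q.1 = 0 ∧ q.2 p.1 = 0
  have : Std.Symm r := ⟨fun _ _ h => h.symm⟩
  obtain ⟨p, hp_one, hp_zero⟩ := exists_seq_of_forall_finset_exists' (fun p => p.2 p.1 = 1) r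
    fun s _ => by
      obtain ⟨a, g, hFa, hgs, hga⟩ :=
        exists_biorthogonal_extension hX (s.finite_toSet.image Prod.fst)
          (s.finite_toSet.image Prod.snd)
      exact ⟨(a, g), hga, fun q hq => ⟨hFa _ (Set.mem_image_of_mem _ hq),
        hgs _ (Set.mem_image_of_mem _ hq)⟩⟩
  obtain ⟨e, he⟩ := Countable.exists_injective_nat ι
  refine ⟨fun i => (p (e i)).1, fun i => (p (e i)).2, fun i j => ?_⟩
  split_ifs with hij
  · exact hij ▸ hp_one _
  · exact (hp_zero (he.ne hij)).1

end Normed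

theorem exists_halfspace_general
    (𝕜 X : Type*) [RCLike 𝕜] [NormedAddCommGroup X] [NormedSpace 𝕜 X]
    (hX : ¬FiniteDimensional 𝕜 X) :
    ∃ Y : Submodule 𝕜 X, IsClosed (Y : Set X) ∧ ¬FiniteDimensional 𝕜 Y ∧
      ¬FiniteDimensional 𝕜 (X ⧸ Y) := by
  obtain ⟨x, f, hxf⟩ := exists_biorthogonal (ℕ ⊕ ℕ) hX
  let f' : ℕ ⊕ ℕ → Module.Dual 𝕜 X := fun i => f i
  refine ⟨⨅ k, LinearMap.ker (f' (.inr k)), ?_, not_finite_iInf_ker_inr x f' hxf,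
    not_finite_quotient_iInf_ker_inr x f' hxf⟩
  rw [coe_iInf]
  exact isClosed_iInter fun k => (f (.inr k)).isClosed_ker

/-- Every infinite-dimensional Banach space (over ℝ or ℂ) contains a half-space:
a closed subspace of infinite dimension and infinite codimension. -/
theorem exists_halfspace
    (𝕜 X : Type*) [RCLike 𝕜] [NormedAddCommGroup X] [NormedSpace 𝕜 X]
    [CompleteSpace X] (hX : ¬FiniteDimensional 𝕜 X) :
    ∃ Y : Submodule 𝕜 X, IsClosed (Y : Set X) ∧ ¬FiniteDimensional 𝕜 Y ∧
      ¬FiniteDimensional 𝕜 (X ⧸ Y) :=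
  exists_halfspace_general 𝕜 X hX
end

section
/- Let X be a Banach space, T ∈ B(X), e ∈ X a nonzero vector, and A ⊆ ρ(T) a subset of the resolvent set. Define h(λ, e) = (λI − T)^{-1} e for λ ∈ A, and let Y be the closed linear span of {h(λ, e) : λ ∈ A}. Then T(Y) ⊆ Y + span{e}; in particular, Y is almost-invariant for T with defect at most one. -/
/-! The identity `T h(λ, e) = λ h(λ, e) - e` puts `T` of every resolvent vector in `Y + span{e}`.
This sum of a closed subspace and a line is closed, so continuity of `T` extends the inclusion
from the span of the resolvent vectors to its closure `Y`. -/

theorem mul_resolvent_of_mem_resolventSet {R A : Type*} [CommSemiring R] [Ring A] [Algebra R A]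
    {a : A} {r : R} (hr : r ∈ resolventSet R a) :
    a * resolvent a r = r • resolvent a r - 1 := by
  have h : (algebraMap R A r - a) * resolvent a r = 1 := Ring.mul_inverse_cancel _ hr
  rw [sub_mul, Algebra.algebraMap_eq_smul_one, smul_one_mul] at h
  rw [← h, sub_sub_cancel]

theorem ContinuousLinearMap.apply_resolvent_of_mem_resolventSet {𝕜 E : Type*} [CommRing 𝕜]
    [AddCommGroup E] [Module 𝕜 E] [TopologicalSpace E] [IsTopologicalAddGroup E]
    [ContinuousConstSMul 𝕜 E] {T : E →L[𝕜] E} {z : 𝕜} (hz : z ∈ resolventSet 𝕜 T) (x : E) :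
    T (resolvent T z x) = z • resolvent T z x - x :=
  congr($(mul_resolvent_of_mem_resolventSet hz) x)

theorem Submodule.map_topologicalClosure_le_sup_of_map_le {𝕜 E : Type*}
    [NontriviallyNormedField 𝕜] [CompleteSpace 𝕜] [AddCommGroup E] [TopologicalSpace E]
    [IsTopologicalAddGroup E] [Module 𝕜 E] [ContinuousSMul 𝕜 E] (T : E →L[𝕜] E)
    {S F : Submodule 𝕜 E} [FiniteDimensional 𝕜 F]
    (h : S.map (T : E →ₗ[𝕜] E) ≤ S.topologicalClosure ⊔ F) :
    S.topologicalClosure.map (T : E →ₗ[𝕜] E) ≤ S.topologicalClosure ⊔ F :=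
  (S.topologicalClosure_map T).trans <| topologicalClosure_minimal _ h <|
    isClosed_sup_finiteDimensional _ _ S.isClosed_topologicalClosure

theorem resolvent_span_almost_invariant_general
    {X : Type*} [NormedAddCommGroup X] [NormedSpace ℂ X]
    (T : X →L[ℂ] X) (e : X) (A : Set ℂ)
    (hA : A ⊆ resolventSet ℂ T) :
    ∀ y ∈ (Submodule.span ℂ ((fun z => resolvent T z e) '' A)).topologicalClosure,
      T y ∈ (Submodule.span ℂ ((fun z => resolvent T z e) '' A)).topologicalClosure ⊔
        Submodule.span ℂ {e} := by
  set Y := Submodule.span ℂ ((fun z => resolvent T z e) '' A)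
  have hTY : Y.map (T : X →ₗ[ℂ] X) ≤ Y.topologicalClosure ⊔ Submodule.span ℂ {e} := by
    rw [Submodule.map_span, Submodule.span_le]
    rintro _ ⟨_, ⟨z, hz, rfl⟩, rfl⟩
    have hzY : resolvent T z e ∈ Y.topologicalClosure :=
      Y.le_topologicalClosure (Submodule.subset_span ⟨z, hz, rfl⟩)
    change T (resolvent T z e) ∈ _
    rw [T.apply_resolvent_of_mem_resolventSet (hA hz)]
    exact sub_mem (Submodule.mem_sup_left (Y.topologicalClosure.smul_mem z hzY))
      (Submodule.mem_sup_right (Submodule.mem_span_singleton_self e))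
  exact fun y hy ↦ Submodule.map_topologicalClosure_le_sup_of_map_le T hTY
    (Submodule.mem_map_of_mem hy)

/-- For `A ⊆ ρ(T)` and `e ≠ 0`, the closed span `Y` of the resolvent vectors
`h(λ, e) = (λI - T)⁻¹ e`, `λ ∈ A`, satisfies `T(Y) ⊆ Y + span{e}`; in particular
`Y` is almost-invariant for `T` with defect at most one. -/
theorem resolvent_span_almost_invariant
    {X : Type*} [NormedAddCommGroup X] [NormedSpace ℂ X] [CompleteSpace X]
    (T : X →L[ℂ] X) (e : X) (he : e ≠ 0) (A : Set ℂ)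
    (hA : A ⊆ resolventSet ℂ T) :
    ∀ y ∈ (Submodule.span ℂ ((fun z => resolvent T z e) '' A)).topologicalClosure,
      T y ∈ (Submodule.span ℂ ((fun z => resolvent T z e) '' A)).topologicalClosure ⊔
        Submodule.span ℂ {e} :=
  resolvent_span_almost_invariant_general T e A hA
end
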